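/- arXiv:1306.1505 — 4 statements merged into one kernel-verified Lean document; each statement's English description precedes it below -/
import Mathlib

section
/- Let β₁, β₂ ∈ ℂ with β₁ ≠ 1 and β₂ ≠ 0, and define f(μ) = e^{iμ} − 1 − (iβ₂/(β₁−1))(e^{iμ}+1)/μ. Then there exists N such that for every integer n with |n| ≥ N, f has exactly one zero μ_n in the disk {μ : |μ − 2πn| ≤ C/|n|} for a suitable constant C, and μ_n = 2πn + (β₂/(β₁−1))·1/(πn) + O(1/n²) as |n| → ∞. -/
/-!
Write `a = I β₂ / (β₁ - 1)`. For `μ ∉ {0, a}`, `f μ = 0` says `exp (I μ) = 1 + 2a / (μ - a)`.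
Near `z₀ = 2πn` the right-hand side is `1 + O(1/n)`, so with the principal logarithm the equation
becomes the fixed-point problem `μ = z₀ - I log (1 + 2a / (μ - a))`. On the disc of radius
`O(1/n)` about `z₀` this map sends the disc into itself and has derivative `O(1/n²)`, so by
Banach's theorem it has exactly one fixed point there. Finally `log (1 + u) = u + O(u²)` and
`u = 2a / (μ - a) = a / (πn) + O(1/n²)` give `μ = 2πn - I a / (πn) + O(1/n²)`.
-/

open Complex Real Metric Set

noncomputable def charFactor (a μ : ℂ) : ℂ := exp (I * μ) - 1 - a * (exp (I * μ) + 1) / μ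

noncomputable def zeroMap (z₀ a μ : ℂ) : ℂ := z₀ - I * log (1 + 2 * a / (μ - a))

lemma charFactor_eq_zero_iff {a μ : ℂ} (hμ : μ ≠ 0) (hμa : μ - a ≠ 0) :
    charFactor a μ = 0 ↔ exp (I * μ) = 1 + 2 * a / (μ - a) := by
  rw [charFactor, sub_sub, sub_eq_zero, ← sub_eq_iff_eq_add', eq_div_iff hμ,
    ← sub_eq_iff_eq_add', eq_div_iff hμa]
  constructor <;> intro h <;> linear_combination h

lemma Complex.log_eq_I_mul_iff {w δ : ℂ} (hw : w ≠ 0) (hδ : |δ.re| < π) :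
    log w = I * δ ↔ w = exp (I * δ) := by
  have him : (I * δ).im = δ.re := by simp
  rw [abs_lt] at hδ
  constructor
  · rintro h
    rw [← h, exp_log hw]
  · rintro rfl
    exact log_exp (by rw [him]; linarith) (by rw [him]; linarith)

lemma zeroMap_eq_self_iff {z₀ a μ : ℂ} :
    zeroMap z₀ a μ = μ ↔ log (1 + 2 * a / (μ - a)) = I * (μ - z₀) := by
  rw [zeroMap]
  constructor <;> intro h
  · linear_combination I * h + log (1 + 2 * a / (μ - a)) * I_sq
  · linear_combination (-I) * h + (z₀ - μ) * I_sq

lemma Complex.norm_log_one_add_sub_self_le_sq {u : ℂ} (hu : ‖u‖ ≤ 1 / 2) :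
    ‖log (1 + u) - u‖ ≤ ‖u‖ ^ 2 := by
  refine (norm_log_one_add_sub_self_le (hu.trans_lt (by norm_num))).trans ?_
  have : (1 - ‖u‖)⁻¹ ≤ 2 := by rw [inv_le_comm₀] <;> linarith [norm_nonneg u]
  nlinarith [sq_nonneg ‖u‖]

section ZeroMap

variable {z₀ a μ : ℂ} {r ρ : ℝ}

lemma le_norm_sub_of_mem_closedBall (hz₀ : ρ + r + ‖a‖ ≤ ‖z₀‖) (hμ : μ ∈ closedBall z₀ r) :
    ρ ≤ ‖μ - a‖ := by
  rw [mem_closedBall_iff_norm] at hμ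
  have := norm_sub_norm_le z₀ (μ - a)
  have := norm_add_le (z₀ - μ) a
  rw [sub_add, norm_sub_rev z₀ μ] at this
  linarith

lemma norm_two_mul_div_sub_le (hρ : 0 < ρ) (hz₀ : ρ + r + ‖a‖ ≤ ‖z₀‖)
    (hμ : μ ∈ closedBall z₀ r) : ‖2 * a / (μ - a)‖ ≤ 2 * ‖a‖ / ρ := by
  rw [norm_div, norm_mul, Complex.norm_two]
  exact div_le_div_of_nonneg_left (by positivity) hρ (le_norm_sub_of_mem_closedBall hz₀ hμ)

lemma norm_two_mul_div_sub_le_half (hρ : 0 < ρ) (hz₀ : ρ + r + ‖a‖ ≤ ‖z₀‖)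
    (h4 : 4 * ‖a‖ ≤ ρ) (hμ : μ ∈ closedBall z₀ r) : ‖2 * a / (μ - a)‖ ≤ 1 / 2 :=
  (norm_two_mul_div_sub_le hρ hz₀ hμ).trans (by rw [div_le_iff₀ hρ]; linarith)

lemma mapsTo_zeroMap (hρ : 0 < ρ) (hz₀ : ρ + r + ‖a‖ ≤ ‖z₀‖) (h4 : 4 * ‖a‖ ≤ ρ)
    (h3 : 3 * ‖a‖ ≤ r * ρ) : MapsTo (zeroMap z₀ a) (closedBall z₀ r) (closedBall z₀ r) := by
  intro μ hμ
  rw [mem_closedBall_iff_norm, zeroMap, sub_sub_cancel_left, norm_neg, norm_mul, norm_I,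
    one_mul]
  calc ‖log (1 + 2 * a / (μ - a))‖ ≤ 3 / 2 * ‖2 * a / (μ - a)‖ :=
        norm_log_one_add_half_le_self (norm_two_mul_div_sub_le_half hρ hz₀ h4 hμ)
    _ ≤ 3 / 2 * (2 * ‖a‖ / ρ) := by gcongr; exact norm_two_mul_div_sub_le hρ hz₀ hμ
    _ = 3 * ‖a‖ / ρ := by ring
    _ ≤ r := by rwa [div_le_iff₀ hρ]

lemma hasDerivAt_zeroMap (hμa : μ - a ≠ 0) (hslit : 1 + 2 * a / (μ - a) ∈ slitPlane) :
    HasDerivAt (zeroMap z₀ a) (2 * I * a / ((μ - a) ^ 2 * (1 + 2 * a / (μ - a)))) μ := by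
  have h : HasDerivAt (fun μ ↦ z₀ - I * log (1 + 2 * a / (μ - a)))
      (-(I * ((0 * (μ - a) - 2 * a * 1) / (μ - a) ^ 2 / (1 + 2 * a / (μ - a))))) μ :=
    ((((hasDerivAt_const μ (2 * a)).div ((hasDerivAt_id' μ).sub_const a) hμa).const_add
      1).clog hslit).const_mul I |>.const_sub z₀
  refine h.congr_deriv ?_
  rw [div_div]
  ring

lemma lipschitzOnWith_zeroMap (hρ : 0 < ρ) (hz₀ : ρ + r + ‖a‖ ≤ ‖z₀‖) (h4 : 4 * ‖a‖ ≤ ρ)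
    (h8 : 8 * ‖a‖ ≤ ρ ^ 2) : LipschitzOnWith (1 / 2) (zeroMap z₀ a) (closedBall z₀ r) := by
  have hsub {μ} (hμ : μ ∈ closedBall z₀ r) := le_norm_sub_of_mem_closedBall hz₀ hμ
  have hu {μ} (hμ : μ ∈ closedBall z₀ r) := norm_two_mul_div_sub_le_half hρ hz₀ h4 hμ
  refine (convex_closedBall z₀ r).lipschitzOnWith_of_nnnorm_hasDerivWithin_le
    (fun μ hμ ↦ (hasDerivAt_zeroMap (norm_pos_iff.mp ((hsub hμ).trans_lt' hρ))
      (mem_slitPlane_of_norm_lt_one ((hu hμ).trans_lt (by norm_num)))).hasDerivWithinAt)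
    fun μ hμ ↦ ?_
  have hone : 1 / 2 ≤ ‖1 + 2 * a / (μ - a)‖ := by
    have := norm_sub_norm_le (1 : ℂ) (-(2 * a / (μ - a)))
    rw [norm_one, norm_neg, sub_neg_eq_add] at this
    linarith [hu hμ]
  rw [← NNReal.coe_le_coe, coe_nnnorm, norm_div, norm_mul, norm_mul, norm_mul, norm_pow,
    Complex.norm_two, norm_I, mul_one]
  calc 2 * ‖a‖ / (‖μ - a‖ ^ 2 * ‖1 + 2 * a / (μ - a)‖) ≤ 2 * ‖a‖ / (ρ ^ 2 * (1 / 2)) := by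
        gcongr; exact hsub hμ
    _ ≤ _ := by rw [div_le_iff₀ (by positivity)]; push_cast; linarith

theorem existsUnique_zeroMap_eq_self (hρ : 0 < ρ) (hz₀ : ρ + r + ‖a‖ ≤ ‖z₀‖)
    (h4 : 4 * ‖a‖ ≤ ρ) (h3 : 3 * ‖a‖ ≤ r * ρ) (h8 : 8 * ‖a‖ ≤ ρ ^ 2) :
    ∃! μ, μ ∈ closedBall z₀ r ∧ zeroMap z₀ a μ = μ := by
  have hmaps := mapsTo_zeroMap hρ hz₀ h4 h3
  have hlip := lipschitzOnWith_zeroMap hρ hz₀ h4 h8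
  have hr : 0 ≤ r := nonneg_of_mul_nonneg_left (h3.trans' (by positivity)) hρ
  obtain ⟨μ, hμ, hfix, -⟩ := ContractingWith.exists_fixedPoint' isClosed_closedBall.isComplete
    hmaps ⟨by norm_num, hlip.mapsToRestrict hmaps⟩ (mem_closedBall_self hr) (edist_ne_top _ _)
  refine ⟨μ, ⟨hμ, hfix⟩, fun ν ⟨hν, hνfix⟩ ↦ dist_eq_zero.mp ?_⟩
  have := hlip.dist_le_mul ν hν μ hμ
  rw [hνfix, hfix] at this
  push_cast at this
  linarith [dist_nonneg (x := ν) (y := μ)]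

lemma charFactor_eq_zero_iff_zeroMap_eq_self (hexp : exp (I * z₀) = 1) (hρ : 0 < ρ)
    (hz₀ : ρ + r + ‖a‖ ≤ ‖z₀‖) (h4 : 4 * ‖a‖ ≤ ρ) (hrπ : r < π)
    (hμ : μ ∈ closedBall z₀ r) : charFactor a μ = 0 ↔ zeroMap z₀ a μ = μ := by
  have hμa : μ - a ≠ 0 := norm_pos_iff.mp ((le_norm_sub_of_mem_closedBall hz₀ hμ).trans_lt' hρ)
  have hμ0 : μ ≠ 0 := by
    rintro rfl
    rw [mem_closedBall_iff_norm, zero_sub, norm_neg] at hμ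
    linarith [norm_nonneg a]
  have hexpμ : exp (I * μ) = exp (I * (μ - z₀)) := by
    rw [mul_sub, Complex.exp_sub, hexp, div_one]
  rw [charFactor_eq_zero_iff hμ0 hμa, zeroMap_eq_self_iff, hexpμ, log_eq_I_mul_iff, eq_comm]
  · exact slitPlane_ne_zero (mem_slitPlane_of_norm_lt_one
      ((norm_two_mul_div_sub_le_half hρ hz₀ h4 hμ).trans_lt (by norm_num)))
  · exact (abs_re_le_norm _).trans_lt ((mem_closedBall_iff_norm.mp hμ).trans_lt hrπ)

theorem existsUnique_charFactor_eq_zero (hexp : exp (I * z₀) = 1) (hρ : 0 < ρ)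
    (hz₀ : ρ + r + ‖a‖ ≤ ‖z₀‖) (hrπ : r < π) (h4 : 4 * ‖a‖ ≤ ρ) (h3 : 3 * ‖a‖ ≤ r * ρ)
    (h8 : 8 * ‖a‖ ≤ ρ ^ 2) : ∃! μ, μ ∈ closedBall z₀ r ∧ charFactor a μ = 0 :=
  (existsUnique_congr fun _ ↦ and_congr_right fun hμ ↦
    charFactor_eq_zero_iff_zeroMap_eq_self hexp hρ hz₀ h4 hrπ hμ).mpr
    (existsUnique_zeroMap_eq_self hρ hz₀ h4 h3 h8)

lemma norm_sub_add_I_mul_le_of_zeroMap_eq_self (hρ : 0 < ρ) (hz₀ : ρ + r + ‖a‖ ≤ ‖z₀‖)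
    (h4 : 4 * ‖a‖ ≤ ρ) (hμ : μ ∈ closedBall z₀ r) (hfix : zeroMap z₀ a μ = μ) :
    ‖μ - z₀ + I * (2 * a / z₀)‖ ≤ (2 * ‖a‖ / ρ) ^ 2 + 2 * ‖a‖ * (r + ‖a‖) / (ρ * ‖z₀‖) := by
  set u := 2 * a / (μ - a)
  have hsub := le_norm_sub_of_mem_closedBall hz₀ hμ
  have hr : 0 ≤ r := nonneg_of_mem_closedBall hμ
  have hz₀0 : 0 < ‖z₀‖ := by linarith [norm_nonneg a]
  have hμa : μ - a ≠ 0 := norm_pos_iff.mp (hsub.trans_lt' hρ)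
  have hlog : ‖log (1 + u) - u‖ ≤ (2 * ‖a‖ / ρ) ^ 2 := by
    refine (norm_log_one_add_sub_self_le_sq (norm_two_mul_div_sub_le_half hρ hz₀ h4 hμ)).trans ?_
    gcongr
    exact norm_two_mul_div_sub_le hρ hz₀ hμ
  have hdiff : ‖u - 2 * a / z₀‖ ≤ 2 * ‖a‖ * (r + ‖a‖) / (ρ * ‖z₀‖) := by
    have hz₀ne : z₀ ≠ 0 := norm_pos_iff.mp hz₀0
    have : u - 2 * a / z₀ = 2 * a * (z₀ - μ + a) / ((μ - a) * z₀) := by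
      simp only [u]
      field_simp
      ring
    rw [this, norm_div, norm_mul, norm_mul, norm_mul, Complex.norm_two]
    have hnum : ‖z₀ - μ + a‖ ≤ r + ‖a‖ := by
      refine (norm_add_le _ _).trans ?_
      rw [norm_sub_rev]
      linarith [mem_closedBall_iff_norm.mp hμ]
    have : 0 ≤ 2 * ‖a‖ * (r + ‖a‖) := by positivity
    gcongr
  have hsplit : μ - z₀ + I * (2 * a / z₀) = -I * (log (1 + u) - u) + -I * (u - 2 * a / z₀) := by
    nth_rewrite 1 [← hfix]
    rw [zeroMap]
    ring
  rw [hsplit]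
  refine (norm_add_le _ _).trans ?_
  rw [norm_mul, norm_mul, norm_neg, norm_I, one_mul, one_mul]
  exact add_le_add hlog hdiff

end ZeroMap

theorem charFactor_zeros_near_two_pi_mul_int {a : ℂ} {A : ℝ} (hA : ‖a‖ ≤ A) {n : ℤ}
    (hn : 2 * A + 2 ≤ |(n : ℝ)|) :
    (∃! μ : ℂ, ‖μ - 2 * π * n‖ ≤ 4 * A / π / |(n : ℝ)| ∧ charFactor a μ = 0) ∧
      ∀ μ : ℂ, ‖μ - 2 * π * n‖ ≤ 4 * A / π / |(n : ℝ)| → charFactor a μ = 0 →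
        ‖μ - 2 * π * n + I * a / (π * n)‖ ≤ A * (A + 1) / (n : ℝ) ^ 2 := by
  set nr := |(n : ℝ)|
  set z₀ : ℂ := 2 * π * n
  set r := 4 * A / π / nr
  have hA0 : 0 ≤ A := (norm_nonneg a).trans hA
  have hnr : 0 < nr := by linarith
  have hπ := pi_gt_three
  have hρ : 0 < π * nr := by positivity
  have hexp : exp (I * z₀) = 1 := by
    rw [show I * z₀ = n * (2 * π * I) by ring]
    exact exp_int_mul_two_pi_mul_I n
  have hnormz₀ : ‖z₀‖ = 2 * (π * nr) := by
    simp only [z₀, nr, norm_mul, Complex.norm_two, norm_real, Real.norm_of_nonneg pi_pos.le,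
      norm_intCast]
    ring
  have hrρ : r * (π * nr) = 4 * A := by simp only [r]; field_simp
  have hρA : 6 * A + 6 ≤ π * nr := by nlinarith
  have hr1 : r < 1 := by
    simp only [r]
    rw [div_div, div_lt_one hρ]
    linarith
  have hrπ : r < π := by linarith
  have hz₀ : π * nr + r + ‖a‖ ≤ ‖z₀‖ := by rw [hnormz₀]; linarith
  have h4 : 4 * ‖a‖ ≤ π * nr := by linarith
  have h3 : 3 * ‖a‖ ≤ r * (π * nr) := by rw [hrρ]; linarith
  have h8 : 8 * ‖a‖ ≤ (π * nr) ^ 2 := by nlinarith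
  refine ⟨?_, fun μ hμ hzero ↦ ?_⟩
  · simpa only [mem_closedBall_iff_norm] using
      existsUnique_charFactor_eq_zero hexp hρ hz₀ hrπ h4 h3 h8
  rw [← mem_closedBall_iff_norm] at hμ
  have hfix := (charFactor_eq_zero_iff_zeroMap_eq_self hexp hρ hz₀ h4 hrπ hμ).mp hzero
  have hcorr : I * a / (π * n) = I * (2 * a / z₀) := by
    rw [show z₀ = 2 * (π * n) by ring, mul_div_mul_left _ _ two_ne_zero, mul_div_assoc]
  rw [hcorr]
  calc _ ≤ (2 * ‖a‖ / (π * nr)) ^ 2 + 2 * ‖a‖ * (r + ‖a‖) / (π * nr * ‖z₀‖) :=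
        norm_sub_add_I_mul_le_of_zeroMap_eq_self hρ hz₀ h4 hμ hfix
    _ ≤ (2 * A / (π * nr)) ^ 2 + 2 * A * (1 + A) / (π * nr * (2 * (π * nr))) := by
        rw [hnormz₀]; gcongr
    _ = (5 * A ^ 2 + A) / (π * nr) ^ 2 := by field_simp; ring
    _ ≤ (5 * A ^ 2 + A) / (3 * nr) ^ 2 := by gcongr
    _ ≤ A * (A + 1) / (n : ℝ) ^ 2 := by
        rw [mul_pow, ← sq_abs (n : ℝ), div_le_div_iff₀ (by positivity) (by positivity)]
        nlinarith [sq_nonneg nr]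

theorem stmt_3_general (β₁ β₂ : ℂ)
    (f : ℂ → ℂ)
    (hf : ∀ μ : ℂ, f μ = exp (I * μ) - 1 - (I * β₂ / (β₁ - 1)) * (exp (I * μ) + 1) / μ) :
    ∃ (C K : ℝ) (N : ℕ) (μ : ℤ → ℂ), 0 < C ∧ 0 < K ∧
      ∀ n : ℤ, (N : ℤ) ≤ |n| →
        f (μ n) = 0 ∧
        ‖μ n - 2 * π * n‖ ≤ C / |(n : ℝ)| ∧
        (∀ z : ℂ, f z = 0 → ‖z - 2 * π * n‖ ≤ C / |(n : ℝ)| → z = μ n) ∧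
        ‖μ n - 2 * π * n - (β₂ / (β₁ - 1)) * (1 / (π * n))‖ ≤ K / (n : ℝ) ^ 2 := by
  set a := I * β₂ / (β₁ - 1)
  obtain rfl : f = charFactor a := funext hf
  set A := ‖a‖ + 1
  have hcoef : β₂ / (β₁ - 1) = -I * a := by linear_combination (β₂ / (β₁ - 1)) * I_sq
  have key (n : ℤ) : ∃ μ : ℂ, (⌈2 * A + 2⌉₊ : ℤ) ≤ |n| →
      charFactor a μ = 0 ∧ ‖μ - 2 * π * n‖ ≤ 4 * A / π / |(n : ℝ)| ∧
      (∀ z, charFactor a z = 0 → ‖z - 2 * π * n‖ ≤ 4 * A / π / |(n : ℝ)| → z = μ) ∧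
      ‖μ - 2 * π * n - (β₂ / (β₁ - 1)) * (1 / (π * n))‖ ≤ A * (A + 1) / (n : ℝ) ^ 2 := by
    by_cases hn : (⌈2 * A + 2⌉₊ : ℤ) ≤ |n|
    · have hnr : 2 * A + 2 ≤ |(n : ℝ)| := by
        have := Int.cast_le (R := ℝ) |>.mpr hn
        push_cast at this
        linarith [Nat.le_ceil (2 * A + 2)]
      obtain ⟨⟨μ, ⟨hμ, hzero⟩, huniq⟩, hbound⟩ :=
        charFactor_zeros_near_two_pi_mul_int (le_add_of_nonneg_right zero_le_one) hnr
      refine ⟨μ, fun _ ↦ ⟨hzero, hμ, fun z hz hzμ ↦ huniq z ⟨hzμ, hz⟩, ?_⟩⟩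
      convert hbound μ hμ hzero using 2
      rw [hcoef]
      ring
    · exact ⟨0, fun h ↦ absurd h hn⟩
  choose μ hμ using key
  exact ⟨4 * A / π, A * (A + 1), ⌈2 * A + 2⌉₊, μ, by positivity, by positivity, hμ⟩

theorem stmt_3 (β₁ β₂ : ℂ) (hβ₁ : β₁ ≠ 1) (hβ₂ : β₂ ≠ 0)
    (f : ℂ → ℂ)
    (hf : ∀ μ : ℂ, f μ = exp (I * μ) - 1 - (I * β₂ / (β₁ - 1)) * (exp (I * μ) + 1) / μ) :
    ∃ (C K : ℝ) (N : ℕ) (μ : ℤ → ℂ), 0 < C ∧ 0 < K ∧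
      ∀ n : ℤ, (N : ℤ) ≤ |n| →
        f (μ n) = 0 ∧
        ‖μ n - 2 * π * n‖ ≤ C / |(n : ℝ)| ∧
        (∀ z : ℂ, f z = 0 → ‖z - 2 * π * n‖ ≤ C / |(n : ℝ)| → z = μ n) ∧
        ‖μ n - 2 * π * n - (β₂ / (β₁ - 1)) * (1 / (π * n))‖ ≤ K / (n : ℝ) ^ 2 :=
  stmt_3_general β₁ β₂ f hf
end

section
/- Let q be absolutely continuous on [0,1] and let μ_n be any sequence with |μ_n − 2πn| ≤ C/n for some constant C. Then s_{μ_n} := ∫₀¹ sin(2μ_n t) q(t) dt = (1/(2μ_n))[q(0) − q(1)] + o(1/n) and c_{μ_n} := ∫₀¹ cos(2μ_n t) q(t) dt = o(1/n) as n → ∞. -/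
/-!
Since `q` is only absolutely continuous, integrate by parts through Fubini on the triangle
`s ≤ t`: for `z ≠ 0`, `∫ sin (z t) q t` and `∫ cos (z t) q t` equal boundary terms plus
`∫ cos (z t) q' t`, resp. `∫ sin (z t) q' t`, all divided by `z`. For `z = 2 μ n`, which lies
within `o(1)` of `4πn = 2π · 2n`, we get `cos z → 1` and `sin z → 0`, and the integrals against
`q'` tend to `0` by the Riemann–Lebesgue lemma, which survives the `o(1)` complex perturbation of
the frequency by dominated convergence. The remainders are thus `o(1)`, and dividing by
`z ≍ n` makes them `o(1/n)`.
-/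

open Complex Real Filter Asymptotics MeasureTheory Set Topology
open scoped Interval

theorem intervalIntegral_indicator_Ici {E : Type*} [NormedAddCommGroup E] [NormedSpace ℝ E]
    {f : ℝ → E} {a b s : ℝ} (hs : s ∈ Ioc a b) :
    ∫ t in a..b, (Ici s).indicator f t = ∫ t in s..b, f t := by
  have h : Ici s ∩ Ioc a b = Icc s b := by
    ext t; simp only [mem_inter_iff, mem_Ici, mem_Ioc, mem_Icc]; grind
  rw [intervalIntegral.integral_of_le (hs.1.le.trans hs.2), intervalIntegral.integral_of_le hs.2,
    integral_indicator measurableSet_Ici, Measure.restrict_restrict measurableSet_Ici, h,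
    integral_Icc_eq_integral_Ioc]

theorem integral_mul_primitive_eq_integral_tail_mul {𝕜 : Type*} [RCLike 𝕜] {f g : ℝ → 𝕜}
    {a b : ℝ} (hab : a ≤ b)
    (hf : IntervalIntegrable f volume a b) (hg : IntervalIntegrable g volume a b) :
    ∫ t in a..b, f t * ∫ s in a..t, g s = ∫ s in a..b, (∫ t in s..b, f t) * g s := by
  set F : ℝ → ℝ → 𝕜 := fun t s => f t * {x | x ≤ t}.indicator g s
  have hF : F.uncurry = {p : ℝ × ℝ | p.2 ≤ p.1}.indicator (fun p => f p.1 * g p.2) := by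
    ext p; by_cases h : p.2 ≤ p.1 <;> simp [F, Function.uncurry, h]
  have hFi : IntegrableOn F.uncurry (Ι a b ×ˢ Ι a b) := by
    rw [hF, IntegrableOn, Measure.volume_eq_prod, ← Measure.prod_restrict]
    exact (hf.def'.mul_prod hg.def').indicator (measurableSet_le measurable_snd measurable_fst)
  calc ∫ t in a..b, f t * ∫ s in a..t, g s = ∫ t in a..b, ∫ s in a..b, F t s := by
        refine intervalIntegral.integral_congr fun t ht => ?_
        rw [uIcc_of_le hab] at ht
        simp only [F, intervalIntegral.integral_const_mul, intervalIntegral.integral_indicator ht]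
    _ = ∫ s in a..b, ∫ t in a..b, F t s := intervalIntegral_intervalIntegral_swap hFi
    _ = ∫ s in a..b, (∫ t in s..b, f t) * g s := by
        refine intervalIntegral.integral_congr_ae (Eventually.of_forall fun s hs => ?_)
        rw [uIoc_of_le hab] at hs
        have hFs : (fun t => F t s) = fun t => (Ici s).indicator f t * g s := by
          ext t; by_cases h : s ≤ t <;> simp [F, h]
        rw [hFs, intervalIntegral.integral_mul_const, intervalIntegral_indicator_Ici hs]

theorem integral_deriv_mul_eq_sub_of_eq_primitive {𝕜 : Type*} [RCLike 𝕜] {u u' q q' : ℝ → 𝕜}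
    {a b : ℝ} (hab : a ≤ b)
    (hu : ∀ x ∈ Icc a b, HasDerivAt u (u' x) x) (hu' : IntervalIntegrable u' volume a b)
    (hq' : IntervalIntegrable q' volume a b) (hq : ∀ x ∈ Icc a b, q x = q a + ∫ t in a..x, q' t) :
    ∫ t in a..b, u' t * q t = u b * q b - u a * q a - ∫ t in a..b, u t * q' t := by
  rw [← uIcc_of_le hab] at hu hq
  have hFTC : ∀ s ∈ uIcc a b, ∫ t in s..b, u' t = u b - u s := fun s hs =>
    intervalIntegral.integral_eq_sub_of_hasDerivAt
      (fun x hx => hu x (uIcc_subset_uIcc_right hs hx)) (hu'.mono_set (uIcc_subset_uIcc_right hs))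
  have hu_cont : ContinuousOn u (uIcc a b) := fun x hx => (hu x hx).continuousAt.continuousWithinAt
  have hQ : ContinuousOn (fun x => ∫ t in a..x, q' t) (uIcc a b) :=
    intervalIntegral.continuousOn_primitive_interval' hq' left_mem_uIcc
  have hqb : ∫ t in a..b, q' t = q b - q a := by
    rw [hq b right_mem_uIcc]; ring
  calc ∫ t in a..b, u' t * q t
      = ∫ t in a..b, (u' t * q a + u' t * ∫ s in a..t, q' s) :=
        intervalIntegral.integral_congr fun t ht => by simp only [hq t ht, mul_add]
    _ = (u b - u a) * q a + ∫ s in a..b, (u b - u s) * q' s := by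
        rw [intervalIntegral.integral_add (hu'.mul_const _) (hu'.mul_continuousOn hQ),
          intervalIntegral.integral_mul_const, hFTC a left_mem_uIcc,
          integral_mul_primitive_eq_integral_tail_mul hab hu' hq']
        congr 1
        exact intervalIntegral.integral_congr fun s hs => by simp only [hFTC s hs]
    _ = u b * q b - u a * q a - ∫ t in a..b, u t * q' t := by
        simp only [sub_mul]
        rw [intervalIntegral.integral_sub (hq'.const_mul _) (hq'.continuousOn_mul hu_cont),
          intervalIntegral.integral_const_mul, hqb]
        ring

theorem hasDerivAt_cos_mul_ofReal (z : ℂ) (t : ℝ) :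
    HasDerivAt (fun t : ℝ => cos (z * t)) (-sin (z * t) * z) t := by
  simpa using (((hasDerivAt_id (t : ℂ)).const_mul z).ccos).comp_ofReal

theorem hasDerivAt_sin_mul_ofReal (z : ℂ) (t : ℝ) :
    HasDerivAt (fun t : ℝ => sin (z * t)) (cos (z * t) * z) t := by
  simpa using (((hasDerivAt_id (t : ℂ)).const_mul z).csin).comp_ofReal

section IntegrationByParts

variable {q q' : ℝ → ℂ} {a b : ℝ}

theorem integral_sin_mul_eq_of_eq_primitive (hab : a ≤ b) (hq' : IntervalIntegrable q' volume a b)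
    (hq : ∀ x ∈ Icc a b, q x = q a + ∫ t in a..x, q' t) {z : ℂ} (hz : z ≠ 0) :
    ∫ t in a..b, sin (z * t) * q t =
      (cos (z * a) * q a - cos (z * b) * q b + ∫ t in a..b, cos (z * t) * q' t) / z := by
  have hu : ∀ x ∈ Icc a b, HasDerivAt (fun t : ℝ => -cos (z * t) / z) (sin (z * x)) x :=
    fun x _ => by simpa [hz] using ((hasDerivAt_cos_mul_ofReal z x).neg.div_const z)
  rw [integral_deriv_mul_eq_sub_of_eq_primitive hab hu
    ((by fun_prop : Continuous _).intervalIntegrable a b) hq' hq]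
  simp only [neg_div, neg_mul, div_mul_eq_mul_div, intervalIntegral.integral_neg,
    intervalIntegral.integral_div]
  ring

theorem integral_cos_mul_eq_of_eq_primitive (hab : a ≤ b) (hq' : IntervalIntegrable q' volume a b)
    (hq : ∀ x ∈ Icc a b, q x = q a + ∫ t in a..x, q' t) {z : ℂ} (hz : z ≠ 0) :
    ∫ t in a..b, cos (z * t) * q t =
      (sin (z * b) * q b - sin (z * a) * q a - ∫ t in a..b, sin (z * t) * q' t) / z := by
  have hu : ∀ x ∈ Icc a b, HasDerivAt (fun t : ℝ => sin (z * t) / z) (cos (z * x)) x :=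
    fun x _ => by simpa [hz] using ((hasDerivAt_sin_mul_ofReal z x).div_const z)
  rw [integral_deriv_mul_eq_sub_of_eq_primitive hab hu
    ((by fun_prop : Continuous _).intervalIntegrable a b) hq' hq]
  simp only [div_mul_eq_mul_div, intervalIntegral.integral_div]
  ring

end IntegrationByParts

section Oscillatory

theorem tendsto_intervalIntegral_exp_mul_I_cocompact (g : ℝ → ℂ) (a b : ℝ) :
    Tendsto (fun r : ℝ => ∫ t in a..b, exp (r * t * I) * g t) (cocompact ℝ) (𝓝 0) := by
  -- `𝓕 G (-r / 2π) = ∫ exp (r t I) G t`, where `G` is `g` cut off to the interval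
  have hc : -(2 * π)⁻¹ ≠ 0 := by simp [pi_ne_zero]
  have hRL := (Real.zero_at_infty_fourier ((Ι a b).indicator g)).comp
    (Homeomorph.mulLeft₀ _ hc).map_cocompact.le
  have hsign := hRL.const_smul (if a ≤ b then (1 : ℝ) else -1)
  rw [smul_zero] at hsign
  refine hsign.congr fun r => ?_
  simp only [Function.comp_apply, Homeomorph.coe_mulLeft₀, Real.fourier_real_eq_integral_exp_smul,
    intervalIntegral.intervalIntegral_eq_integral_uIoc, ← integral_indicator measurableSet_uIoc]
  congr 1
  refine integral_congr_ae (Eventually.of_forall fun t => ?_)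
  by_cases ht : t ∈ Ι a b
  · simp only [indicator_of_mem ht, smul_eq_mul]
    congr 2
    push_cast
    field_simp
  · simp [indicator_of_notMem ht]

variable {g : ℝ → ℂ} {a b : ℝ}

theorem IntervalIntegrable.exp_mul_I_mul (hg : IntervalIntegrable g volume a b) (c : ℂ) :
    IntervalIntegrable (fun t : ℝ => exp (c * t * I) * g t) volume a b :=
  hg.continuousOn_mul (by fun_prop : Continuous fun t : ℝ => exp (c * t * I)).continuousOn

theorem norm_exp_mul_I_sub_exp_mul_I (w : ℂ) (r t : ℝ) :
    ‖exp (w * t * I) - exp (r * t * I)‖ = ‖exp ((w - r) * t * I) - 1‖ := by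
  rw [show w * t * I = (w - r) * t * I + r * t * I by ring, Complex.exp_add, ← sub_one_mul,
    norm_mul, ← ofReal_mul, norm_exp_ofReal_mul_I, mul_one]

theorem norm_exp_mul_I_sub_one_le {d : ℂ} (hd : ‖d‖ ≤ 1) (t : ℝ) :
    ‖exp (d * t * I) - 1‖ ≤ Real.exp |t| + 1 :=
  calc ‖exp (d * t * I) - 1‖ ≤ ‖exp (d * t * I)‖ + 1 := by
        simpa using norm_sub_le (exp (d * t * I)) 1
    _ ≤ Real.exp ‖d * t * I‖ + 1 := by gcongr; exact norm_exp_le_exp_norm _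
    _ ≤ Real.exp |t| + 1 := by
        gcongr
        rw [norm_mul, norm_mul, norm_I, mul_one, norm_real, Real.norm_eq_abs]
        exact mul_le_of_le_one_left (abs_nonneg t) hd

variable {ι : Type*} {l : Filter ι} [l.IsCountablyGenerated] {w : ι → ℂ} {r : ι → ℝ}

theorem tendsto_intervalIntegral_exp_mul_I_of_tendsto_sub (hg : IntervalIntegrable g volume a b)
    (hr : Tendsto r l (cocompact ℝ)) (hw : Tendsto (fun i => w i - r i) l (𝓝 0)) :
    Tendsto (fun i => ∫ t in a..b, exp (w i * t * I) * g t) l (𝓝 0) := by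
  have hsmall : ∀ᶠ i in l, ‖w i - r i‖ ≤ 1 := by
    simpa using ((norm_zero (E := ℂ) ▸ hw.norm).eventually_lt_const one_pos).mono fun _ h => h.le
  have hdiff : Tendsto (fun i => ∫ t in a..b, (exp (w i * t * I) - exp (r i * t * I)) * g t) l
      (𝓝 0) := by
    simpa using intervalIntegral.tendsto_integral_filter_of_dominated_convergence
      (F := fun i t => (exp (w i * t * I) - exp (r i * t * I)) * g t) (f := fun _ => 0)
      (fun t => (Real.exp |t| + 1) * ‖g t‖)
      (Eventually.of_forall fun i => ((by fun_prop : Continuous fun t : ℝ =>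
        exp (w i * t * I) - exp (r i * t * I)).aestronglyMeasurable.mul
        hg.def'.aestronglyMeasurable))
      (hsmall.mono fun i hi => Eventually.of_forall fun t _ => by
        rw [norm_mul, norm_exp_mul_I_sub_exp_mul_I]
        gcongr
        exact norm_exp_mul_I_sub_one_le hi t)
      (hg.norm.continuousOn_mul
        (by fun_prop : Continuous fun t : ℝ => Real.exp |t| + 1).continuousOn)
      (Eventually.of_forall fun t _ => by
        have h := ((Complex.continuous_exp.tendsto _).comp
          ((hw.mul_const (t : ℂ)).mul_const I)).sub_const 1
        simp only [zero_mul, Complex.exp_zero, sub_self] at h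
        rw [tendsto_zero_iff_norm_tendsto_zero]
        simpa [norm_mul, norm_exp_mul_I_sub_exp_mul_I] using h.norm.mul_const ‖g t‖)
  have hsum := hdiff.add ((tendsto_intervalIntegral_exp_mul_I_cocompact g a b).comp hr)
  rw [add_zero] at hsum
  refine hsum.congr fun i => ?_
  simp only [Function.comp_apply, sub_mul]
  rw [intervalIntegral.integral_sub (hg.exp_mul_I_mul _) (hg.exp_mul_I_mul _)]
  exact sub_add_cancel _ _

theorem tendsto_intervalIntegral_exp_neg_mul_I_of_tendsto_sub
    (hg : IntervalIntegrable g volume a b) (hr : Tendsto r l (cocompact ℝ))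
    (hw : Tendsto (fun i => w i - r i) l (𝓝 0)) :
    Tendsto (fun i => ∫ t in a..b, exp (-w i * t * I) * g t) l (𝓝 0) :=
  tendsto_intervalIntegral_exp_mul_I_of_tendsto_sub (r := fun i => -r i) hg
    (Tendsto.comp (Homeomorph.neg ℝ).map_cocompact.le hr)
    ((neg_zero (G := ℂ) ▸ hw.neg).congr fun i => by push_cast; ring)

theorem tendsto_intervalIntegral_cos_mul_of_tendsto_sub (hg : IntervalIntegrable g volume a b)
    (hr : Tendsto r l (cocompact ℝ)) (hw : Tendsto (fun i => w i - r i) l (𝓝 0)) :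
    Tendsto (fun i => ∫ t in a..b, cos (w i * t) * g t) l (𝓝 0) := by
  have hsum := ((tendsto_intervalIntegral_exp_mul_I_of_tendsto_sub hg hr hw).add
    (tendsto_intervalIntegral_exp_neg_mul_I_of_tendsto_sub hg hr hw)).div_const 2
  rw [add_zero, zero_div] at hsum
  refine hsum.congr fun i => ?_
  rw [← intervalIntegral.integral_add (hg.exp_mul_I_mul _) (hg.exp_mul_I_mul _),
    ← intervalIntegral.integral_div]
  refine intervalIntegral.integral_congr fun t _ => ?_
  simp only [Complex.cos, neg_mul]
  ring

theorem tendsto_intervalIntegral_sin_mul_of_tendsto_sub (hg : IntervalIntegrable g volume a b)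
    (hr : Tendsto r l (cocompact ℝ)) (hw : Tendsto (fun i => w i - r i) l (𝓝 0)) :
    Tendsto (fun i => ∫ t in a..b, sin (w i * t) * g t) l (𝓝 0) := by
  have hsum := (((tendsto_intervalIntegral_exp_neg_mul_I_of_tendsto_sub hg hr hw).sub
    (tendsto_intervalIntegral_exp_mul_I_of_tendsto_sub hg hr hw)).mul_const I).div_const 2
  rw [sub_zero, zero_mul, zero_div] at hsum
  refine hsum.congr fun i => ?_
  rw [← intervalIntegral.integral_sub (hg.exp_mul_I_mul _) (hg.exp_mul_I_mul _),
    ← intervalIntegral.integral_mul_const, ← intervalIntegral.integral_div]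
  refine intervalIntegral.integral_congr fun t _ => ?_
  simp only [Complex.sin, neg_mul]
  ring

end Oscillatory

section Periodicity

variable {ι : Type*} {l : Filter ι} {w : ι → ℂ} {k : ι → ℤ}

theorem tendsto_cos_of_tendsto_sub_int_mul_two_pi
    (h : Tendsto (fun i => w i - k i * (2 * π)) l (𝓝 0)) :
    Tendsto (fun i => cos (w i)) l (𝓝 1) := by
  simpa [Function.comp_def, Complex.cos_sub_int_mul_two_pi] using
    (Complex.continuous_cos.tendsto 0).comp h

theorem tendsto_sin_of_tendsto_sub_int_mul_two_pi
    (h : Tendsto (fun i => w i - k i * (2 * π)) l (𝓝 0)) :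
    Tendsto (fun i => sin (w i)) l (𝓝 0) := by
  simpa [Function.comp_def, Complex.sin_sub_int_mul_two_pi] using
    (Complex.continuous_sin.tendsto 0).comp h

end Periodicity

section LinearGrowth

variable {z : ℕ → ℂ} {c : ℂ}

theorem eventually_norm_ge_of_tendsto_sub_mul_natCast (hc : c ≠ 0)
    (h : Tendsto (fun n => z n - c * n) atTop (𝓝 0)) :
    ∀ᶠ n : ℕ in atTop, ‖c‖ / 2 * n ≤ ‖z n‖ := by
  filter_upwards [(norm_zero (E := ℂ) ▸ h.norm).eventually_lt_const (half_pos (norm_pos_iff.2 hc)),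
    eventually_ge_atTop 1] with n hn hn1
  have hn1' : (1 : ℝ) ≤ n := by exact_mod_cast hn1
  have htri := norm_sub_norm_le (c * n) (c * n - z n)
  rw [sub_sub_cancel, norm_sub_rev, norm_mul, Complex.norm_natCast] at htri
  nlinarith [norm_nonneg c]

theorem isBigO_inv_of_tendsto_sub_mul_natCast (hc : c ≠ 0)
    (h : Tendsto (fun n => z n - c * n) atTop (𝓝 0)) :
    (fun n => (z n)⁻¹) =O[atTop] fun n : ℕ => 1 / (n : ℝ) := by
  refine IsBigO.of_bound (2 / ‖c‖) ?_
  filter_upwards [eventually_norm_ge_of_tendsto_sub_mul_natCast hc h, eventually_gt_atTop 0]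
    with n hn hn0
  have hpos : 0 < ‖c‖ / 2 * n := by have := norm_pos_iff.2 hc; positivity
  calc ‖(z n)⁻¹‖ = ‖z n‖⁻¹ := norm_inv _
    _ ≤ (‖c‖ / 2 * n)⁻¹ := inv_anti₀ hpos hn
    _ = 2 / ‖c‖ * ‖1 / (n : ℝ)‖ := by
        rw [norm_div, norm_one, Real.norm_natCast]; field_simp

theorem eventually_ne_zero_of_tendsto_sub_mul_natCast (hc : c ≠ 0)
    (h : Tendsto (fun n => z n - c * n) atTop (𝓝 0)) :
    ∀ᶠ n : ℕ in atTop, z n ≠ 0 := by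
  filter_upwards [eventually_norm_ge_of_tendsto_sub_mul_natCast hc h, eventually_gt_atTop 0]
    with n hn hn0
  have hpos : 0 < ‖c‖ / 2 * n := by have := norm_pos_iff.2 hc; positivity
  exact norm_pos_iff.1 (hpos.trans_le hn)

theorem isLittleO_one_div_natCast_of_eq_div {E N : ℕ → ℂ} (hc : c ≠ 0)
    (h : Tendsto (fun n => z n - c * n) atTop (𝓝 0)) (hN : Tendsto N atTop (𝓝 0))
    (hE : ∀ n, z n ≠ 0 → E n = N n / z n) :
    E =o[atTop] fun n : ℕ => 1 / (n : ℝ) := by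
  refine ((isBigO_inv_of_tendsto_sub_mul_natCast hc h).mul_isLittleO
    ((isLittleO_one_iff ℝ).2 hN)).congr' ?_ (by simp)
  filter_upwards [eventually_ne_zero_of_tendsto_sub_mul_natCast hc h] with n hn
  rw [hE n hn, div_eq_inv_mul]

end LinearGrowth

theorem stmt_8_general (q q' : ℝ → ℂ)
    (hq' : IntegrableOn q' (Set.Icc 0 1))
    (hq : ∀ x ∈ Set.Icc (0:ℝ) 1, q x = q 0 + ∫ t in (0:ℝ)..x, q' t)
    (μ : ℕ → ℂ) (C : ℝ)
    (hμ : ∀ n : ℕ, 1 ≤ n → ‖μ n - 2 * π * n‖ ≤ C / n) :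
    ((fun n : ℕ =>
        (∫ t in (0:ℝ)..1, Complex.sin (2 * μ n * t) * q t) -
          (1 / (2 * μ n)) * (q 0 - q 1))
      =o[atTop] fun n : ℕ => 1 / (n : ℝ)) ∧
    ((fun n : ℕ => ∫ t in (0:ℝ)..1, Complex.cos (2 * μ n * t) * q t)
      =o[atTop] fun n : ℕ => 1 / (n : ℝ)) := by
  have hq'i : IntervalIntegrable q' volume 0 1 :=
    (intervalIntegrable_iff_integrableOn_Icc_of_le zero_le_one).2 hq'
  have hδ : Tendsto (fun n => μ n - 2 * π * n) atTop (𝓝 0) :=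
    squeeze_zero_norm' (eventually_atTop.2 ⟨1, hμ⟩) (tendsto_const_div_atTop_nhds_zero_nat C)
  have hz : Tendsto (fun n => 2 * μ n - (4 * π : ℂ) * n) atTop (𝓝 0) := by
    simpa using (hδ.const_mul 2).congr fun n => by ring
  have hzr : Tendsto (fun n => 2 * μ n - ((4 * π * n : ℝ) : ℂ)) atTop (𝓝 0) := by
    simpa using hz
  have hzk : Tendsto (fun n => 2 * μ n - ((2 * n : ℕ) : ℤ) * (2 * π)) atTop (𝓝 0) :=
    hz.congr fun n => by push_cast; ring
  have hr : Tendsto (fun n : ℕ => 4 * π * (n : ℝ)) atTop (cocompact ℝ) :=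
    (tendsto_natCast_atTop_atTop.const_mul_atTop (by positivity)).mono_right atTop_le_cocompact
  have h4π : (4 * π : ℂ) ≠ 0 := by simp [pi_ne_zero]
  constructor
  · refine isLittleO_one_div_natCast_of_eq_div h4π hz (N := fun n => q 1 * (1 - cos (2 * μ n)) +
      ∫ t in (0:ℝ)..1, cos (2 * μ n * t) * q' t) ?_ fun n hn => ?_
    · simpa using
        (((tendsto_cos_of_tendsto_sub_int_mul_two_pi hzk).const_sub 1).const_mul (q 1)).add
          (tendsto_intervalIntegral_cos_mul_of_tendsto_sub hq'i hr hzr)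
    · rw [integral_sin_mul_eq_of_eq_primitive zero_le_one hq'i hq hn]
      simp only [ofReal_zero, ofReal_one, mul_zero, mul_one, Complex.cos_zero]
      ring
  · refine isLittleO_one_div_natCast_of_eq_div h4π hz (N := fun n => sin (2 * μ n) * q 1 -
      ∫ t in (0:ℝ)..1, sin (2 * μ n * t) * q' t) ?_ fun n hn => ?_
    · simpa using ((tendsto_sin_of_tendsto_sub_int_mul_two_pi hzk).mul_const (q 1)).sub
        (tendsto_intervalIntegral_sin_mul_of_tendsto_sub hq'i hr hzr)
    · rw [integral_cos_mul_eq_of_eq_primitive zero_le_one hq'i hq hn]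
      simp only [ofReal_zero, ofReal_one, mul_zero, mul_one, Complex.sin_zero]
      ring

theorem stmt_8 (q q' : ℝ → ℂ)
    (hq' : IntegrableOn q' (Set.Icc 0 1))
    (hq : ∀ x ∈ Set.Icc (0:ℝ) 1, q x = q 0 + ∫ t in (0:ℝ)..x, q' t)
    (hq0 : ∫ t in (0:ℝ)..1, q t = 0)
    (μ : ℕ → ℂ) (C : ℝ)
    (hμ : ∀ n : ℕ, 1 ≤ n → ‖μ n - 2 * π * n‖ ≤ C / n) :
    ((fun n : ℕ =>
        (∫ t in (0:ℝ)..1, Complex.sin (2 * μ n * t) * q t) -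
          (1 / (2 * μ n)) * (q 0 - q 1))
      =o[atTop] fun n : ℕ => 1 / (n : ℝ)) ∧
    ((fun n : ℕ => ∫ t in (0:ℝ)..1, Complex.cos (2 * μ n * t) * q t)
      =o[atTop] fun n : ℕ => 1 / (n : ℝ)) :=
  stmt_8_general q q' hq' hq μ C hμ
end

section
/- Let β₃ ≠ −1 and β₄ ∈ ℂ, β₄ ≠ 0. The zeros of the function h(μ) = iμ(1 + β₃)(e^{iμ} + 1) + β₄(e^{iμ} − 1) near the points (2n+1)π satisfy, for large n: there is exactly one zero μ_n in a disk of radius C/n about (2n+1)π, and μ_n = (2n+1)π + (2β₄/(β₃+1))·1/((2n+1)π) + O(1/n²). -/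
/-!
With `q = -I β₄ / (1 + β₃)` one has `h μ = I (1 + β₃) (μ (e^{iμ} + 1) + q (e^{iμ} - 1))`.
Let `c = (2n + 1)π`, so that `e^{ic} = -1`. Then a zero `μ` is exactly a solution of
`e^{i(μ - c)} = (μ - q) / (μ + q)`, and for `μ` within distance `1` of `c` only the principal
branch of the logarithm can occur: the zeros near `c` are the fixed points of
`T μ = c - I log ((μ - q) / (μ + q))`. For `|μ| ≥ R ≫ |q|` the Cayley transform
`(μ - q) / (μ + q)` is `O(|q| / R)`-close to `1` and `O(|q| / R²)`-Lipschitz, so `T` is a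
`1/2`-contraction of the disc of radius `C / n` about `c`; Banach's fixed point theorem gives
the unique zero there. Finally `log (1 + w) = w + O(w²)` with `w = -2q / (c + q)` gives
`μ - c = 2Iq / c + O(1 / n²)`, and `2Iq = 2β₄ / (β₃ + 1)`.
-/

open Complex Real

open Metric Set Function

theorem LipschitzOnWith.exists_unique_isFixedPt {α : Type*} [MetricSpace α] {K : NNReal}
    {f : α → α} {s : Set α} (hK : K < 1) (hf : LipschitzOnWith K f s) (hs : IsComplete s)
    (hsf : MapsTo f s s) (hne : s.Nonempty) :
    ∃! y, y ∈ s ∧ IsFixedPt f y := by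
  obtain ⟨x, hx⟩ := hne
  obtain ⟨y, hys, hy, -⟩ := ContractingWith.exists_fixedPoint' hs hsf
    ⟨hK, fun a b ↦ hf a.2 b.2⟩ hx (edist_ne_top _ _)
  refine ⟨y, ⟨hys, hy⟩, fun z ⟨hzs, hz⟩ ↦ dist_le_zero.mp ?_⟩
  have hzy := hf.dist_le_mul z hzs y hys
  rw [hz, hy] at hzy
  have : (K : ℝ) < 1 := hK
  nlinarith [dist_nonneg (x := z) (y := y)]

namespace Complex

theorem norm_log_sub_log_le {w w' : ℂ} (hw : w ∈ closedBall 1 (1 / 2))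
    (hw' : w' ∈ closedBall 1 (1 / 2)) : ‖log w - log w'‖ ≤ 2 * ‖w - w'‖ := by
  have hderiv : ∀ x ∈ closedBall (1 : ℂ) (1 / 2),
      HasDerivWithinAt log x⁻¹ (closedBall 1 (1 / 2)) x := by
    intro x hx
    rw [mem_closedBall, dist_eq_norm] at hx
    have hslit := mem_slitPlane_of_norm_lt_one (z := x - 1) (by linarith)
    rw [add_sub_cancel] at hslit
    exact (hasDerivAt_log hslit).hasDerivWithinAt
  have hbound : ∀ x ∈ closedBall (1 : ℂ) (1 / 2), ‖x⁻¹‖ ≤ 2 := by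
    intro x hx
    rw [mem_closedBall, dist_eq_norm, norm_sub_rev] at hx
    have := norm_sub_norm_le 1 x
    rw [norm_one] at this
    rw [norm_inv]
    exact inv_le_of_inv_le₀ (by norm_num) (by linarith)
  exact (convex_closedBall 1 (1 / 2)).norm_image_sub_le_of_norm_hasDerivWithin_le
    hderiv hbound hw' hw

theorem norm_log_le {w : ℂ} (hw : w ∈ closedBall 1 (1 / 2)) : ‖log w‖ ≤ 2 * ‖w - 1‖ := by
  simpa using norm_log_sub_log_le hw (mem_closedBall_self (by norm_num))

end Complex

theorem half_le_norm_add {E : Type*} [SeminormedAddGroup E] {a b : E} {R : ℝ}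
    (hb : 2 * ‖b‖ ≤ R) (ha : R ≤ ‖a‖) : R / 2 ≤ ‖a + b‖ := by
  linarith [norm_sub_le_norm_add a b]

noncomputable def cayley (q μ : ℂ) : ℂ := (μ - q) / (μ + q)

section Cayley

variable {q μ ν : ℂ} {R : ℝ}

theorem add_ne_zero_of_le_norm (hR : 0 < R) (hRq : 2 * ‖q‖ ≤ R) (hμ : R ≤ ‖μ‖) :
    μ + q ≠ 0 :=
  norm_pos_iff.mp (by linarith [half_le_norm_add hRq hμ])

theorem cayley_sub_one (hμ : μ + q ≠ 0) : cayley q μ - 1 = -2 * q / (μ + q) := by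
  rw [cayley, div_sub_one hμ]; ring

theorem cayley_sub_cayley (hμ : μ + q ≠ 0) (hν : ν + q ≠ 0) :
    cayley q μ - cayley q ν = 2 * q * (μ - ν) / ((μ + q) * (ν + q)) := by
  rw [cayley, cayley, div_sub_div _ _ hμ hν]; ring

theorem norm_cayley_sub_one_le (hR : 0 < R) (hRq : 2 * ‖q‖ ≤ R) (hμ : R ≤ ‖μ‖) :
    ‖cayley q μ - 1‖ ≤ 4 * ‖q‖ / R := by
  have hμq := half_le_norm_add hRq hμ
  rw [cayley_sub_one (add_ne_zero_of_le_norm hR hRq hμ), norm_div, norm_mul,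
    div_le_div_iff₀ (by linarith) hR]
  norm_num
  nlinarith [norm_nonneg q]

theorem norm_cayley_sub_cayley_le (hR : 0 < R) (hRq : 2 * ‖q‖ ≤ R) (hμ : R ≤ ‖μ‖)
    (hν : R ≤ ‖ν‖) : ‖cayley q μ - cayley q ν‖ ≤ 8 * ‖q‖ / R ^ 2 * ‖μ - ν‖ := by
  have hμq := half_le_norm_add hRq hμ
  have hνq := half_le_norm_add hRq hν
  rw [cayley_sub_cayley (add_ne_zero_of_le_norm hR hRq hμ) (add_ne_zero_of_le_norm hR hRq hν),
    norm_div, norm_mul, norm_mul, norm_mul, div_mul_eq_mul_div,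
    div_le_div_iff₀ (mul_pos (by linarith) (by linarith)) (by positivity)]
  norm_num
  have : R ^ 2 / 4 ≤ ‖μ + q‖ * ‖ν + q‖ := by nlinarith
  nlinarith [mul_nonneg (norm_nonneg q) (norm_nonneg (μ - ν))]

theorem cayley_mem_closedBall (hR : 0 < R) (hRq : 8 * ‖q‖ ≤ R) (hμ : R ≤ ‖μ‖) :
    cayley q μ ∈ closedBall 1 (1 / 2) := by
  rw [mem_closedBall, dist_eq_norm]
  refine (norm_cayley_sub_one_le hR (by linarith [norm_nonneg q]) hμ).trans ?_
  rw [div_le_iff₀ hR]; linarith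

theorem norm_log_cayley_le (hR : 0 < R) (hRq : 8 * ‖q‖ ≤ R) (hμ : R ≤ ‖μ‖) :
    ‖log (cayley q μ)‖ ≤ 8 * ‖q‖ / R := by
  have := norm_cayley_sub_one_le (q := q) hR (by linarith [norm_nonneg q]) hμ
  calc ‖log (cayley q μ)‖ ≤ 2 * ‖cayley q μ - 1‖ := norm_log_le (cayley_mem_closedBall hR hRq hμ)
    _ ≤ 2 * (4 * ‖q‖ / R) := by gcongr
    _ = 8 * ‖q‖ / R := by ring

theorem norm_log_cayley_sub_le (hR : 0 < R) (hRq : 8 * ‖q‖ ≤ R) (hμ : R ≤ ‖μ‖)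
    (hν : R ≤ ‖ν‖) : ‖log (cayley q μ) - log (cayley q ν)‖ ≤ 16 * ‖q‖ / R ^ 2 * ‖μ - ν‖ := by
  have := norm_cayley_sub_cayley_le (q := q) hR (by linarith [norm_nonneg q]) hμ hν
  calc ‖log (cayley q μ) - log (cayley q ν)‖ ≤ 2 * ‖cayley q μ - cayley q ν‖ :=
        norm_log_sub_log_le (cayley_mem_closedBall hR hRq hμ) (cayley_mem_closedBall hR hRq hν)
    _ ≤ 2 * (8 * ‖q‖ / R ^ 2 * ‖μ - ν‖) := by gcongr
    _ = 16 * ‖q‖ / R ^ 2 * ‖μ - ν‖ := by ring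

theorem norm_log_cayley_add_le (hR : 0 < R) (hRq : 8 * ‖q‖ ≤ R) (hμ : R ≤ ‖μ‖) :
    ‖log (cayley q μ) + 2 * q / μ‖ ≤ 20 * ‖q‖ ^ 2 / R ^ 2 := by
  have hRq' : 2 * ‖q‖ ≤ R := by linarith [norm_nonneg q]
  have hμq := half_le_norm_add hRq' hμ
  have hμq0 := add_ne_zero_of_le_norm hR hRq' hμ
  have hμ0 : μ ≠ 0 := norm_pos_iff.mp (by linarith)
  set w := cayley q μ - 1 with hw
  have hw4 : ‖w‖ ≤ 4 * ‖q‖ / R := norm_cayley_sub_one_le hR hRq' hμ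
  have hw2 : ‖w‖ ≤ 1 / 2 := by
    simpa [hw, dist_eq_norm] using cayley_mem_closedBall hR hRq hμ
  have htaylor : ‖log (1 + w) - w‖ ≤ ‖w‖ ^ 2 := by
    refine (norm_log_one_add_sub_self_le (by linarith)).trans ?_
    have : (1 - ‖w‖)⁻¹ ≤ 2 := inv_le_of_inv_le₀ (by norm_num) (by linarith)
    nlinarith [sq_nonneg ‖w‖]
  have hlin : ‖w + 2 * q / μ‖ ≤ 4 * ‖q‖ ^ 2 / R ^ 2 := by
    rw [hw, cayley_sub_one hμq0, div_add_div _ _ hμq0 hμ0, norm_div, norm_mul,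
      div_le_div_iff₀ (mul_pos (by linarith) (by linarith)) (by positivity)]
    have : -2 * q * μ + (μ + q) * (2 * q) = 2 * q ^ 2 := by ring
    rw [this, norm_mul, norm_pow]
    norm_num
    nlinarith [mul_le_mul hμ hμq (by positivity) (norm_nonneg _), sq_nonneg ‖q‖]
  have hsq : ‖w‖ ^ 2 ≤ 16 * ‖q‖ ^ 2 / R ^ 2 := by
    calc ‖w‖ ^ 2 ≤ (4 * ‖q‖ / R) ^ 2 := pow_le_pow_left₀ (norm_nonneg w) hw4 2
      _ = 16 * ‖q‖ ^ 2 / R ^ 2 := by ring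
  calc ‖log (cayley q μ) + 2 * q / μ‖ = ‖(log (1 + w) - w) + (w + 2 * q / μ)‖ := by
        rw [hw, add_sub_cancel]; ring_nf
    _ ≤ ‖log (1 + w) - w‖ + ‖w + 2 * q / μ‖ := norm_add_le _ _
    _ ≤ 16 * ‖q‖ ^ 2 / R ^ 2 + 4 * ‖q‖ ^ 2 / R ^ 2 := by linarith
    _ = 20 * ‖q‖ ^ 2 / R ^ 2 := by ring

end Cayley

theorem Complex.ne_zero_of_mem_closedBall_one {w : ℂ} (hw : w ∈ closedBall 1 (1 / 2)) :
    w ≠ 0 := by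
  rintro rfl
  norm_num [mem_closedBall] at hw

theorem sub_le_norm_of_mem_closedBall {E : Type*} [SeminormedAddGroup E] {a b : E} {r : ℝ}
    (h : b ∈ closedBall a r) : ‖a‖ - r ≤ ‖b‖ := by
  linarith [norm_le_of_mem_closedBall (mem_closedBall_comm.mp h)]

noncomputable def cayleyLogMap (q c μ : ℂ) : ℂ := c - I * log (cayley q μ)

section CayleyLogMap

variable {q c μ : ℂ} {R r : ℝ}

theorem norm_cayleyLogMap_sub (μ ν : ℂ) :
    ‖cayleyLogMap q c μ - cayleyLogMap q c ν‖ = ‖log (cayley q μ) - log (cayley q ν)‖ := by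
  rw [cayleyLogMap, cayleyLogMap, show c - I * log (cayley q μ) - (c - I * log (cayley q ν)) =
    -I * (log (cayley q μ) - log (cayley q ν)) by ring, norm_mul, norm_neg, norm_I, one_mul]

theorem lipschitzOnWith_cayleyLogMap (hR : 4 ≤ R) (hRq : 8 * ‖q‖ ≤ R) (hcR : R + r ≤ ‖c‖) :
    LipschitzOnWith (1 / 2) (cayleyLogMap q c) (closedBall c r) := by
  have hR0 : 0 < R := by linarith
  have hhalf : 16 * ‖q‖ / R ^ 2 ≤ 1 / 2 := by
    rw [div_le_iff₀ (by positivity)]; nlinarith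
  refine LipschitzOnWith.of_dist_le_mul fun μ hμ ν hν ↦ ?_
  rw [dist_eq_norm, dist_eq_norm, NNReal.coe_div, NNReal.coe_one, NNReal.coe_two,
    norm_cayleyLogMap_sub]
  refine (norm_log_cayley_sub_le hR0 hRq ?_ ?_).trans (by gcongr)
  · linarith [sub_le_norm_of_mem_closedBall hμ]
  · linarith [sub_le_norm_of_mem_closedBall hν]

theorem mapsTo_cayleyLogMap (hR : 4 ≤ R) (hRq : 8 * ‖q‖ ≤ R) (hr : 16 * ‖q‖ ≤ r * R)
    (hcR : R + r ≤ ‖c‖) : MapsTo (cayleyLogMap q c) (closedBall c r) (closedBall c r) := by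
  intro μ hμ
  have hR0 : 0 < R := by linarith
  have hr0 : 0 ≤ r := nonneg_of_mul_nonneg_left (by linarith [norm_nonneg q]) hR0
  have hTc : dist (cayleyLogMap q c c) c ≤ r / 2 := by
    rw [dist_eq_norm, cayleyLogMap, sub_sub_cancel_left, norm_neg, norm_mul, norm_I, one_mul]
    refine (norm_log_cayley_le hR0 hRq (by linarith)).trans ?_
    rw [div_le_iff₀ hR0]; linarith
  have hTμ := (lipschitzOnWith_cayleyLogMap hR hRq hcR).dist_le_mul μ hμ c
    (mem_closedBall_self hr0)
  rw [mem_closedBall] at hμ ⊢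
  calc dist (cayleyLogMap q c μ) c
      ≤ dist (cayleyLogMap q c μ) (cayleyLogMap q c c) + dist (cayleyLogMap q c c) c :=
        dist_triangle _ _ _
    _ ≤ 1 / 2 * r + r / 2 := by
        gcongr
        exact hTμ.trans (by norm_num; linarith)
    _ = r := by ring

theorem norm_cayleyLogMap_sub_sub_le (hR : 0 < R) (hRq : 8 * ‖q‖ ≤ R) (hμ : R ≤ ‖μ‖)
    (hc : R ≤ ‖c‖) :
    ‖cayleyLogMap q c μ - c - 2 * I * q / c‖
      ≤ 16 * ‖q‖ / R ^ 2 * ‖μ - c‖ + 20 * ‖q‖ ^ 2 / R ^ 2 := by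
  have hsplit : cayleyLogMap q c μ - c - 2 * I * q / c =
      (cayleyLogMap q c μ - cayleyLogMap q c c) - I * (log (cayley q c) + 2 * q / c) := by
    simp only [cayleyLogMap]; ring
  rw [hsplit]
  refine (norm_sub_le _ _).trans ?_
  rw [norm_mul, norm_I, one_mul, norm_cayleyLogMap_sub]
  gcongr
  · exact norm_log_cayley_sub_le hR hRq hμ hc
  · exact norm_log_cayley_add_le hR hRq hc

end CayleyLogMap

noncomputable def reducedDet (q μ : ℂ) : ℂ := μ * (exp (I * μ) + 1) + q * (exp (I * μ) - 1)

section Zeros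

variable {q c μ : ℂ}

theorem reducedDet_eq_zero_iff (hc : exp (I * c) = -1) (hμ : μ + q ≠ 0) :
    reducedDet q μ = 0 ↔ exp (I * (μ - c)) = cayley q μ := by
  have hshift : exp (I * (μ - c)) = -exp (I * μ) := by
    rw [mul_sub, Complex.exp_sub, hc, div_neg, div_one]
  rw [hshift, cayley, eq_div_iff hμ, reducedDet]
  constructor <;> intro h <;> linear_combination -h

theorem reducedDet_eq_zero_of_isFixedPt (hc : exp (I * c) = -1) (hμ : μ + q ≠ 0)
    (hmem : cayley q μ ∈ closedBall 1 (1 / 2)) (hfix : IsFixedPt (cayleyLogMap q c) μ) :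
    reducedDet q μ = 0 := by
  have hfix' : c - I * log (cayley q μ) = μ := hfix
  rw [reducedDet_eq_zero_iff hc hμ, show I * (μ - c) = log (cayley q μ) by
    linear_combination (-I) * hfix' - log (cayley q μ) * I_sq]
  exact Complex.exp_log (ne_zero_of_mem_closedBall_one hmem)

theorem isFixedPt_of_reducedDet_eq_zero (hc : exp (I * c) = -1) (hμ : μ + q ≠ 0)
    (hmem : cayley q μ ∈ closedBall 1 (1 / 2)) (hμc : ‖μ - c‖ ≤ 1) (h0 : reducedDet q μ = 0) :
    IsFixedPt (cayleyLogMap q c) μ := by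
  have hexp := (reducedDet_eq_zero_iff hc hμ).mp h0
  rw [← Complex.exp_log (ne_zero_of_mem_closedBall_one hmem), exp_eq_exp_iff_exists_int] at hexp
  obtain ⟨k, hk⟩ := hexp
  have hlog : ‖log (cayley q μ)‖ ≤ 1 := by
    have := norm_log_le hmem
    rw [mem_closedBall, dist_eq_norm] at hmem
    linarith
  -- the branch `k` of the logarithm is pinned down by `|k| * 2π ≤ ‖μ - c‖ + ‖log⋯‖ ≤ 2`
  have hk0 : k = 0 := by
    have hnorm : ‖(k : ℂ) * (2 * π * I)‖ ≤ 2 := by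
      rw [show (k : ℂ) * (2 * π * I) = I * (μ - c) - log (cayley q μ) by
        linear_combination -hk]
      calc _ ≤ ‖I * (μ - c)‖ + ‖log (cayley q μ)‖ := norm_sub_le _ _
        _ ≤ 2 := by rw [norm_mul, norm_I, one_mul]; linarith
    have : |(k : ℝ)| * (2 * π) ≤ 2 := by
      simpa [norm_mul, abs_of_pos pi_pos, mul_assoc] using hnorm
    by_contra hk
    have : (1 : ℝ) ≤ |(k : ℝ)| := by exact_mod_cast Int.one_le_abs hk
    nlinarith [pi_gt_three]
  rw [hk0, Int.cast_zero, zero_mul, add_zero] at hk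
  rw [IsFixedPt, cayleyLogMap]
  linear_combination I * hk - (μ - c) * I_sq

end Zeros

theorem exists_unique_reducedDet_eq_zero_near {q c : ℂ} {R r : ℝ} (hc : exp (I * c) = -1)
    (hR : 4 ≤ R) (hRq : 8 * ‖q‖ ≤ R) (hr : 16 * ‖q‖ ≤ r * R) (hr1 : r ≤ 1)
    (hcR : R + r ≤ ‖c‖) :
    ∃ z ∈ closedBall c r, reducedDet q z = 0 ∧
      (∀ w ∈ closedBall c r, reducedDet q w = 0 → w = z) ∧
      ‖z - c - 2 * I * q / c‖ ≤ (16 * ‖q‖ + 20 * ‖q‖ ^ 2) / R ^ 2 := by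
  have hR0 : 0 < R := by linarith
  have hRq' : 2 * ‖q‖ ≤ R := by linarith [norm_nonneg q]
  have hr0 : 0 ≤ r := nonneg_of_mul_nonneg_left (by linarith [norm_nonneg q]) hR0
  have hball : ∀ μ ∈ closedBall c r, R ≤ ‖μ‖ := fun μ hμ ↦ by
    linarith [sub_le_norm_of_mem_closedBall hμ]
  obtain ⟨z, ⟨hz, hfix⟩, huniq⟩ := (lipschitzOnWith_cayleyLogMap hR hRq hcR).exists_unique_isFixedPt
    (by norm_num) isClosed_closedBall.isComplete (mapsTo_cayleyLogMap hR hRq hr hcR)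
    ⟨c, mem_closedBall_self hr0⟩
  have hzc : ‖z - c‖ ≤ r := by rwa [mem_closedBall, dist_eq_norm] at hz
  refine ⟨z, hz, reducedDet_eq_zero_of_isFixedPt hc (add_ne_zero_of_le_norm hR0 hRq' (hball z hz))
    (cayley_mem_closedBall hR0 hRq (hball z hz)) hfix, fun w hw h0 ↦ huniq w ⟨hw, ?_⟩, ?_⟩
  · have hwc : ‖w - c‖ ≤ 1 := by rw [mem_closedBall, dist_eq_norm] at hw; linarith
    exact isFixedPt_of_reducedDet_eq_zero hc (add_ne_zero_of_le_norm hR0 hRq' (hball w hw))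
      (cayley_mem_closedBall hR0 hRq (hball w hw)) hwc h0
  · have hasymp := norm_cayleyLogMap_sub_sub_le (c := c) hR0 hRq (hball z hz) (by linarith)
    rw [show cayleyLogMap q c z = z from hfix] at hasymp
    calc ‖z - c - 2 * I * q / c‖ ≤ 16 * ‖q‖ / R ^ 2 * ‖z - c‖ + 20 * ‖q‖ ^ 2 / R ^ 2 := hasymp
      _ ≤ 16 * ‖q‖ / R ^ 2 * r + 20 * ‖q‖ ^ 2 / R ^ 2 := by gcongr
      _ ≤ (16 * ‖q‖ + 20 * ‖q‖ ^ 2) / R ^ 2 := by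
          rw [add_div]; gcongr; exact mul_le_of_le_one_right (by positivity) hr1

theorem exp_I_mul_odd_mul_pi (n : ℕ) : exp (I * ((2 * n + 1) * π)) = -1 := by
  rw [show I * ((2 * n + 1) * π) = π * I + n * (2 * π * I) by ring, Complex.exp_add,
    exp_pi_mul_I, exp_nat_mul_two_pi_mul_I, mul_one]

theorem exists_reducedDet_eq_zero_near_odd_mul_pi (q : ℂ) :
    ∃ (C K : ℝ) (N : ℕ), 0 < C ∧ 0 < K ∧ ∀ n : ℕ, N ≤ n → ∃ z : ℂ,
      reducedDet q z = 0 ∧ ‖z - (2 * n + 1) * π‖ ≤ C / n ∧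
      (∀ w, reducedDet q w = 0 → ‖w - (2 * n + 1) * π‖ ≤ C / n → w = z) ∧
      ‖z - (2 * n + 1) * π - 2 * I * q / ((2 * n + 1) * π)‖ ≤ K / (n : ℝ) ^ 2 := by
  set C := 16 * ‖q‖ + 1 with hC
  refine ⟨C, C + 20 * ‖q‖ ^ 2, ⌈C⌉₊ + 4, by positivity, by positivity, fun n hn ↦ ?_⟩
  have hCn : C + 4 ≤ n := by
    have := Nat.le_ceil C
    have : ((⌈C⌉₊ + 4 : ℕ) : ℝ) ≤ n := by exact_mod_cast hn
    push_cast at this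
    linarith
  have hn0 : (0 : ℝ) < n := by linarith [norm_nonneg q]
  have hr1 : C / n ≤ 1 := by rw [div_le_one hn0]; linarith
  have hcnorm : ‖((2 * n + 1) * π : ℂ)‖ = (2 * n + 1) * π := by
    rw [show ((2 * n + 1) * π : ℂ) = (((2 * n + 1) * π : ℝ) : ℂ) by push_cast; ring,
      norm_real, Real.norm_of_nonneg (by positivity)]
  obtain ⟨z, hz, h0, huniq, hasymp⟩ := exists_unique_reducedDet_eq_zero_near (q := q)
    (R := n) (r := C / n) (exp_I_mul_odd_mul_pi n) (by linarith [norm_nonneg q])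
    (by linarith [norm_nonneg q]) (by rw [div_mul_cancel₀ _ hn0.ne']; linarith) hr1
    (by rw [hcnorm]; nlinarith [pi_gt_three])
  simp only [mem_closedBall, dist_eq_norm] at hz huniq
  refine ⟨z, h0, hz, fun w hw hwc ↦ huniq w hwc hw, hasymp.trans ?_⟩
  gcongr
  linarith

theorem stmt_14_general (β₃ β₄ : ℂ) (hβ₃ : β₃ ≠ -1)
    (h : ℂ → ℂ)
    (hh : ∀ μ : ℂ, h μ = I * μ * (1 + β₃) * (exp (I * μ) + 1) + β₄ * (exp (I * μ) - 1)) :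
    ∃ (C K : ℝ) (N : ℕ) (μ : ℕ → ℂ), 0 < C ∧ 0 < K ∧
      ∀ n : ℕ, N ≤ n →
        h (μ n) = 0 ∧
        ‖μ n - (2 * n + 1) * π‖ ≤ C / n ∧
        (∀ z : ℂ, h z = 0 → ‖z - (2 * n + 1) * π‖ ≤ C / n → z = μ n) ∧
        ‖μ n - (2 * n + 1) * π - (2 * β₄ / (β₃ + 1)) * (1 / ((2 * n + 1) * π))‖
          ≤ K / (n : ℝ) ^ 2 := by
  have hb : 1 + β₃ ≠ 0 := fun h0 ↦ hβ₃ (by linear_combination h0)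
  set q := -I * β₄ / (1 + β₃)
  have hq : I * (1 + β₃) * q = β₄ := by
    rw [mul_div_assoc', div_eq_iff hb]
    linear_combination -β₄ * (1 + β₃) * I_sq
  have hzero : ∀ μ, h μ = 0 ↔ reducedDet q μ = 0 := fun μ ↦ by
    rw [hh, show I * μ * (1 + β₃) * (exp (I * μ) + 1) + β₄ * (exp (I * μ) - 1) =
      I * (1 + β₃) * reducedDet q μ by rw [reducedDet, ← hq]; ring]
    simp [hb, I_ne_zero]
  have hshift : 2 * β₄ / (β₃ + 1) = 2 * I * q := by
    rw [← hq, add_comm β₃]; field_simp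
  obtain ⟨C, K, N, hC, hK, hzeros⟩ := exists_reducedDet_eq_zero_near_odd_mul_pi q
  choose! μ hμ using hzeros
  refine ⟨C, K, N, μ, hC, hK, fun n hn ↦ ?_⟩
  obtain ⟨h0, hnear, huniq, hasymp⟩ := hμ n hn
  refine ⟨(hzero _).2 h0, hnear, fun z hz ↦ huniq z ((hzero z).1 hz), ?_⟩
  rwa [hshift, mul_one_div]

theorem stmt_14 (β₃ β₄ : ℂ) (hβ₃ : β₃ ≠ -1) (hβ₄ : β₄ ≠ 0)
    (h : ℂ → ℂ)
    (hh : ∀ μ : ℂ, h μ = I * μ * (1 + β₃) * (exp (I * μ) + 1) + β₄ * (exp (I * μ) - 1)) :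
    ∃ (C K : ℝ) (N : ℕ) (μ : ℕ → ℂ), 0 < C ∧ 0 < K ∧
      ∀ n : ℕ, N ≤ n →
        h (μ n) = 0 ∧
        ‖μ n - (2 * n + 1) * π‖ ≤ C / n ∧
        (∀ z : ℂ, h z = 0 → ‖z - (2 * n + 1) * π‖ ≤ C / n → z = μ n) ∧
        ‖μ n - (2 * n + 1) * π - (2 * β₄ / (β₃ + 1)) * (1 / ((2 * n + 1) * π))‖
          ≤ K / (n : ℝ) ^ 2 :=
  stmt_14_general β₃ β₄ hβ₃ h hh
end

section
/- Let f(μ) = e^{iμ} − 1 − (iβ₂/(β₁−1))(e^{iμ}+1)/μ with β₁ ≠ 1, and let μ₀ = 2πn + (β₂/(β₁−1))/(πn) + O(1/n²) be its zero near 2πn. Then there exist constants c > 0 and N such that for all n ≥ N and all μ on the circle |μ − μ₀| = ε_n/n with 0 < ε_n ≤ 1, one has |f(μ)| > c·ε_n/(2n). -/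
/-! Since `f (μ₀ n) = 0`, writing `A = iβ₂/(β₁-1)` and `h = μ - μ₀ n` one has
`f μ = e^{iμ₀}(e^{ih} - 1)(1 - A/μ) - A(e^{iμ₀} + 1)(1/μ - 1/μ₀)`.
For large `n` the asymptotics put `μ₀ n` within `1/10` of `2πn`, so `|e^{iμ₀}| ≥ 9/10`, while
`|e^{ih} - 1| ≥ |h| - |h|²` and the `A`-terms are `O(|h|/n)`; hence `|f μ| > |h|/4`, i.e. `c = 1/2`. -/

open Complex Real Filter

noncomputable def expSubOnePerturbed (A μ : ℂ) : ℂ :=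
  exp (I * μ) - 1 - A * (exp (I * μ) + 1) / μ

lemma expSubOnePerturbed_eq_of_root {A z : ℂ} (hz : expSubOnePerturbed A z = 0) (μ : ℂ) :
    expSubOnePerturbed A μ = exp (I * z) * (exp (I * (μ - z)) - 1) * (1 - A / μ)
      - A * (exp (I * z) + 1) * (1 / μ - 1 / z) := by
  have hexp : exp (I * μ) = exp (I * z) * exp (I * (μ - z)) := by
    rw [← Complex.exp_add]; ring_nf
  rw [← sub_zero (expSubOnePerturbed A μ), ← hz]
  simp only [expSubOnePerturbed, hexp, div_eq_mul_inv]
  ring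

lemma Complex.norm_sub_sq_le_norm_exp_sub_one {x : ℂ} (hx : ‖x‖ ≤ 1) :
    ‖x‖ - ‖x‖ ^ 2 ≤ ‖exp x - 1‖ := by
  have h := norm_sub_norm_le x (exp x - 1)
  rw [← norm_neg (x - _), neg_sub] at h
  linarith [norm_exp_sub_one_sub_id_le hx]

lemma Complex.one_sub_im_le_norm_exp_I_mul (z : ℂ) : 1 - z.im ≤ ‖exp (I * z)‖ := by
  rw [Complex.norm_exp]
  simpa [sub_eq_neg_add] using Real.add_one_le_exp (-z.im)

lemma quarter_norm_sub_lt_norm_expSubOnePerturbed {A z μ : ℂ} {R : ℝ}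
    (hz : expSubOnePerturbed A z = 0) (hR : 20 ≤ R) (hAR : 20 * ‖A‖ ≤ R)
    (hzR : R ≤ ‖z‖) (hμR : R ≤ ‖μ‖)
    (him : |z.im| ≤ 1 / 10) (hμz : ‖μ - z‖ ≤ 1 / R) (hμz0 : μ ≠ z) :
    ‖μ - z‖ / 4 < ‖expSubOnePerturbed A μ‖ := by
  set t := ‖μ - z‖
  set E := ‖exp (I * z)‖
  have ht : 0 < t := norm_pos_iff.mpr (sub_ne_zero.mpr hμz0)
  have hR0 : 0 < R := by linarith
  have ht20 : t ≤ 1 / 20 := hμz.trans (by gcongr)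
  have hE : 9 / 10 ≤ E := by
    linarith [(abs_le.mp him).2, one_sub_im_le_norm_exp_I_mul z]
  have hIt : ‖I * (μ - z)‖ = t := by rw [norm_mul, norm_I, one_mul]
  have hexp : 19 / 20 * t ≤ ‖exp (I * (μ - z)) - 1‖ := by
    have := norm_sub_sq_le_norm_exp_sub_one (x := I * (μ - z)) (by rw [hIt]; linarith)
    rw [hIt] at this
    nlinarith
  have hAμ : ‖A / μ‖ ≤ 1 / 20 := by
    rw [norm_div, div_le_iff₀ (by linarith)]; linarith
  have hfactor : 19 / 20 ≤ ‖1 - A / μ‖ := by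
    have := norm_sub_norm_le (1 : ℂ) (A / μ)
    rw [norm_one] at this
    linarith
  have hinv : ‖1 / μ - 1 / z‖ ≤ t / (R * R) := by
    have hμ0 : μ ≠ 0 := norm_pos_iff.mp (by linarith)
    have hz0 : z ≠ 0 := norm_pos_iff.mp (by linarith)
    rw [div_sub_div _ _ hμ0 hz0, one_mul, mul_one, norm_div, norm_sub_rev, norm_mul]
    gcongr
  have hmain :
      E * (19 / 20 * t) * (19 / 20) ≤ ‖exp (I * z) * (exp (I * (μ - z)) - 1) * (1 - A / μ)‖ := by
    rw [norm_mul, norm_mul]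
    gcongr
  have herr : ‖A * (exp (I * z) + 1) * (1 / μ - 1 / z)‖ ≤ (E + 1) * t / 400 := by
    calc ‖A * (exp (I * z) + 1) * (1 / μ - 1 / z)‖
        ≤ R / 20 * (E + 1) * (t / (R * R)) := by
          rw [norm_mul, norm_mul]
          gcongr
          · linarith
          · exact (norm_add_le _ _).trans (by rw [norm_one])
      _ = (E + 1) * t / (20 * R) := by field_simp
      _ ≤ (E + 1) * t / 400 := by gcongr; linarith
  rw [expSubOnePerturbed_eq_of_root hz]
  have := norm_sub_norm_le (exp (I * z) * (exp (I * (μ - z)) - 1) * (1 - A / μ))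
    (A * (exp (I * z) + 1) * (1 / μ - 1 / z))
  nlinarith

lemma norm_sub_two_pi_mul_le {w B : ℂ} {K : ℝ} {n : ℕ} (hn : 1 ≤ n)
    (h : ‖w - 2 * π * n - B * (1 / (π * n))‖ ≤ K / (n : ℝ) ^ 2) :
    ‖w - 2 * π * n‖ ≤ (‖B‖ + |K|) / n := by
  have hn' : (1 : ℝ) ≤ n := by exact_mod_cast hn
  have hB : ‖B * (1 / (π * n))‖ ≤ ‖B‖ / n := by
    rw [norm_mul, norm_div, norm_one, norm_mul, Complex.norm_natCast, Complex.norm_real,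
      Real.norm_of_nonneg pi_pos.le, mul_one_div]
    gcongr
    exact le_mul_of_one_le_left (by positivity) (by linarith [pi_gt_three])
  have hK : K / (n : ℝ) ^ 2 ≤ |K| / n :=
    calc K / (n : ℝ) ^ 2 ≤ |K| / (n : ℝ) ^ 2 := by gcongr; exact le_abs_self K
      _ ≤ |K| / n := by gcongr; exact le_self_pow₀ hn' two_ne_zero
  calc ‖w - 2 * π * n‖ ≤ ‖w - 2 * π * n - B * (1 / (π * n))‖ + ‖B * (1 / (π * n))‖ :=
        norm_le_norm_sub_add _ _
    _ ≤ (‖B‖ + |K|) / n := by rw [add_div]; linarith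

lemma one_add_le_norm_and_abs_im_le {z : ℂ} {n : ℕ} (hn : 1 ≤ n)
    (hz : ‖z - 2 * π * n‖ ≤ 1 / 10) : (n : ℝ) + 1 ≤ ‖z‖ ∧ |z.im| ≤ 1 / 10 := by
  have hn' : (1 : ℝ) ≤ n := by exact_mod_cast hn
  constructor
  · have h := norm_sub_norm_le (2 * π * n : ℂ) z
    rw [norm_sub_rev] at h
    have : ‖(2 * π * n : ℂ)‖ = 2 * π * n := by
      norm_cast; exact Real.norm_of_nonneg (by positivity)
    nlinarith [pi_gt_three]
  · simpa using (abs_im_le_norm (z - 2 * π * n)).trans hz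

theorem stmt_19_general (β₁ β₂ : ℂ)
    (f : ℂ → ℂ)
    (hf : ∀ μ : ℂ, f μ = exp (I * μ) - 1 - (I * β₂ / (β₁ - 1)) * (exp (I * μ) + 1) / μ)
    (μ₀ : ℕ → ℂ) (K : ℝ)
    (hroot : ∀ n : ℕ, 1 ≤ n → f (μ₀ n) = 0)
    (hasym : ∀ n : ℕ, 1 ≤ n →
      ‖μ₀ n - 2 * π * n - (β₂ / (β₁ - 1)) * (1 / (π * n))‖ ≤ K / (n : ℝ) ^ 2) :
    ∃ (c : ℝ) (N : ℕ), 0 < c ∧ ∀ n : ℕ, N ≤ n →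
      ∀ ε : ℝ, 0 < ε → ε ≤ 1 → ∀ μ : ℂ, ‖μ - μ₀ n‖ = ε / n →
        c * ε / (2 * n) < ‖f μ‖ := by
  set A := I * β₂ / (β₁ - 1)
  have hfA : f = expSubOnePerturbed A := funext hf
  have hsmall : ∀ᶠ n : ℕ in atTop, (‖β₂ / (β₁ - 1)‖ + |K|) / n ≤ 1 / 10 :=
    (tendsto_const_div_atTop_nhds_zero_nat _).eventually (ge_mem_nhds (by norm_num))
  obtain ⟨N, hN⟩ := eventually_atTop.mp
    (hsmall.and (eventually_ge_atTop ⌈20 * (‖A‖ + 1)⌉₊))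
  refine ⟨1 / 2, N, by norm_num, fun n hn ε hε hε1 μ hμ => ?_⟩
  obtain ⟨hsmall_n, hceil⟩ := hN n hn
  have hnA : 20 * ‖A‖ + 20 ≤ (n : ℝ) := by
    have := (Nat.le_ceil _).trans (Nat.cast_le.mpr hceil); linarith
  have hn1' : (1 : ℝ) ≤ n := by linarith [norm_nonneg A]
  have hn1 : 1 ≤ n := by exact_mod_cast hn1'
  obtain ⟨hz, him⟩ := one_add_le_norm_and_abs_im_le hn1
    ((norm_sub_two_pi_mul_le hn1 (hasym n hn1)).trans hsmall_n)
  have ht : ‖μ - μ₀ n‖ ≤ 1 / n := hμ.trans_le (by gcongr)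
  have hμn : (n : ℝ) ≤ ‖μ‖ := by
    have : 1 / (n : ℝ) ≤ 1 := div_le_one_of_le₀ hn1' (by positivity)
    linarith [norm_sub_norm_le (μ₀ n) μ, norm_sub_rev μ (μ₀ n)]
  have hμz : μ ≠ μ₀ n := by
    rw [← sub_ne_zero, ← norm_pos_iff, hμ]; positivity
  rw [hfA]
  calc 1 / 2 * ε / (2 * n) = ‖μ - μ₀ n‖ / 4 := by rw [hμ]; ring
    _ < ‖expSubOnePerturbed A μ‖ :=
      quarter_norm_sub_lt_norm_expSubOnePerturbed (hfA ▸ hroot n hn1)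
        (by linarith [norm_nonneg A]) (by linarith) (by linarith) hμn him ht hμz

theorem stmt_19 (β₁ β₂ : ℂ) (hβ₁ : β₁ ≠ 1)
    (f : ℂ → ℂ)
    (hf : ∀ μ : ℂ, f μ = exp (I * μ) - 1 - (I * β₂ / (β₁ - 1)) * (exp (I * μ) + 1) / μ)
    (μ₀ : ℕ → ℂ) (K : ℝ)
    (hroot : ∀ n : ℕ, 1 ≤ n → f (μ₀ n) = 0)
    (hasym : ∀ n : ℕ, 1 ≤ n →
      ‖μ₀ n - 2 * π * n - (β₂ / (β₁ - 1)) * (1 / (π * n))‖ ≤ K / (n : ℝ) ^ 2) :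
    ∃ (c : ℝ) (N : ℕ), 0 < c ∧ ∀ n : ℕ, N ≤ n →
      ∀ ε : ℝ, 0 < ε → ε ≤ 1 → ∀ μ : ℂ, ‖μ - μ₀ n‖ = ε / n →
        c * ε / (2 * n) < ‖f μ‖ :=
  stmt_19_general β₁ β₂ f hf μ₀ K hroot hasym
end
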